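/- (Proposition 6.) The threshold function t ↦ Θ(t) = k₀(t)·F(k₀(t)) + k₁(t)·(1 − F(k₁(t))) + t·(F(k₁(t)) − F(k₀(t))) is strictly increasing in t on [0, ∞). Consequently, for any voter cost γ ∈ ℝ and any t′ > t ≥ 0, if γ ≤ Θ(t) (so the voter's optimal k is k₁(t)) then γ ≤ Θ(t′) (the voter's optimal k is k₁(t′)). -/

import Mathlib

open MeasureTheory

/-- A cost distribution: a CDF `F` with continuously differentiable structure
given by a strictly positive, differentiable, log-concave density `f` with full
support on `ℝ`. -/
structure CostDist where
  F : ℝ → ℝ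
  f : ℝ → ℝ
  deriv_eq : ∀ x : ℝ, HasDerivAt F (f x) x
  f_pos : ∀ x : ℝ, 0 < f x
  f_diff : Differentiable ℝ f
  f_logConcave : ConcaveOn ℝ Set.univ fun x => Real.log (f x)
  tendsto_bot : Filter.Tendsto F Filter.atBot (nhds 0)
  tendsto_top : Filter.Tendsto F Filter.atTop (nhds 1)

/-- Expected responsiveness of the classifier `δ = (δ₁, δ₀)` at precision `φ`. -/
noncomputable def rho (d1 d0 phi : ℝ) : ℝ := (d1 + d0 - 1) * (2 * phi - 1)

/-- The designer's expected payoff `EU_D(δ | r)`. -/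
noncomputable def EUD (D : CostDist) (phi A1 A0 B1 B0 r d1 d0 : ℝ) : ℝ :=
  D.F (r * rho d1 d0 phi) *
      (phi * (A1 * d1 + A0 * (1 - d1)) + (1 - phi) * (A0 * d0 + A1 * (1 - d0))) +
    (1 - D.F (r * rho d1 d0 phi)) *
      (phi * (B1 * d0 + B0 * (1 - d0)) + (1 - phi) * (B0 * d1 + B1 * (1 - d1)))

/-- A voter's expected payoff conditional on complying, `EU₁(r | γ)`. -/
noncomputable def EU1 (D : CostDist) (phi t gamma d1 d0 r : ℝ) : ℝ :=
  -gamma + r * rho d1 d0 phi * (1 - D.F (r * rho d1 d0 phi)) + t * D.F (r * rho d1 d0 phi)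

/-- A voter's expected payoff conditional on not complying, `EU₀(r)`. -/
noncomputable def EU0 (D : CostDist) (phi t d1 d0 r : ℝ) : ℝ :=
  -(r * rho d1 d0 phi) * D.F (r * rho d1 d0 phi) + t * D.F (r * rho d1 d0 phi)

/-- A voter's overall payoff `V(r | γ) = max(EU₁(r | γ), EU₀(r))`. -/
noncomputable def V (D : CostDist) (phi t gamma d1 d0 r : ℝ) : ℝ :=
  max (EU1 D phi t gamma d1 d0 r) (EU0 D phi t d1 d0 r)

/-- Strict quasiconcavity of a real function on a set. -/
def StrictQuasiconcaveOn (s : Set ℝ) (g : ℝ → ℝ) : Prop :=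
  ∀ ⦃x⦄, x ∈ s → ∀ ⦃y⦄, y ∈ s → x ≠ y → ∀ ⦃a b : ℝ⦄, 0 < a → 0 < b → a + b = 1 →
    min (g x) (g y) < g (a * x + b * y)

/-- Strict quasiconvexity of a real function on a set. -/
def StrictQuasiconvexOn (s : Set ℝ) (g : ℝ → ℝ) : Prop :=
  ∀ ⦃x⦄, x ∈ s → ∀ ⦃y⦄, y ∈ s → x ≠ y → ∀ ⦃a b : ℝ⦄, 0 < a → 0 < b → a + b = 1 →
    g (a * x + b * y) < max (g x) (g y)

/-- `(r, δ)` is an equilibrium: `r` maximizes the median voter's payoff given `δ`,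
and `δ ∈ [0,1]²` maximizes the designer's payoff given `r`. -/
def IsEquilibrium (D : CostDist) (phi t A1 A0 B1 B0 gammaMu r d1 d0 : ℝ) : Prop :=
  d1 ∈ Set.Icc (0 : ℝ) 1 ∧ d0 ∈ Set.Icc (0 : ℝ) 1 ∧
  (∀ r' : ℝ, V D phi t gammaMu d1 d0 r' ≤ V D phi t gammaMu d1 d0 r) ∧
  (∀ e1 ∈ Set.Icc (0 : ℝ) 1, ∀ e0 ∈ Set.Icc (0 : ℝ) 1,
    EUD D phi A1 A0 B1 B0 r e1 e0 ≤ EUD D phi A1 A0 B1 B0 r d1 d0)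
/-!
`Θ(t) = t + min_x (x - t) F(x) + max_y (y - t) (1 - F(y))`, the extrema being attained at
`k₀(t)` and `k₁(t)`: by log-concavity `F/f` increases and `(1 - F)/f` decreases, so the
first-order conditions are sufficient. Testing the optimum at `s` against `k₀(u)` and the
optimum at `u` against `k₁(s)` gives `Θ(u) - Θ(s) ≥ (u - s) (F(k₁(s)) - F(k₀(u)))`, which is
positive whenever `s < u ≤ k₁(s)` because `k₀(u) < u`. As `k₁(t) - t` decreases, steps of length
`k₁(t') - t' > 0` are admissible all along `[t, t']`, and chaining them gives `Θ(t) < Θ(t')`.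
-/

open Set Filter

theorem ConcaveOn.add_le_add_of_le_of_nonneg {g : ℝ → ℝ} (hg : ConcaveOn ℝ univ g)
    {x y δ : ℝ} (hxy : x ≤ y) (hδ : 0 ≤ δ) : g x + g (y + δ) ≤ g (x + δ) + g y := by
  rcases (show x ≤ y + δ by linarith).eq_or_lt with h | h
  · obtain rfl : x = y := by linarith
    obtain rfl : δ = 0 := by linarith
    simp
  -- `x + δ` and `y` are the two convex combinations of `x` and `y + δ` with weights `λ`, `1 - λ`
  set lam := δ / (y + δ - x)
  have hlam : lam * (y + δ - x) = δ := div_mul_cancel₀ _ (by linarith)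
  have hlam₀ : 0 ≤ lam := div_nonneg hδ (by linarith)
  have hlam₁ : lam ≤ 1 := (div_le_one (by linarith)).mpr (by linarith)
  have h₁ := hg.2 (mem_univ x) (mem_univ (y + δ)) (sub_nonneg.mpr hlam₁) hlam₀ (by ring)
  have h₂ := hg.2 (mem_univ x) (mem_univ (y + δ)) hlam₀ (sub_nonneg.mpr hlam₁) (by ring)
  simp only [smul_eq_mul] at h₁ h₂
  rw [show (1 - lam) * x + lam * (y + δ) = x + δ by linear_combination hlam] at h₁
  rw [show lam * x + (1 - lam) * (y + δ) = y by linear_combination -hlam] at h₂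
  linarith

theorem lt_of_forall_short_step_lt {f : ℝ → ℝ} {a b δ : ℝ} (hδ : 0 < δ) (hab : a < b)
    (hstep : ∀ s u, a ≤ s → s < u → u ≤ b → u ≤ s + δ → f s < f u) : f a < f b := by
  obtain ⟨n, hn⟩ := exists_nat_ge ((b - a) / δ)
  suffices ∀ n : ℕ, ∀ c, a < c → c ≤ b → c ≤ a + n * δ → f a < f c from
    this n b hab le_rfl (by rw [div_le_iff₀ hδ] at hn; linarith)
  intro n
  induction n with
  | zero =>
    intro c hac _ hc
    simp only [Nat.cast_zero, zero_mul, add_zero] at hc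
    linarith
  | succ n ih =>
    intro c hac hcb hc
    rcases le_or_gt c (a + δ) with hcδ | hcδ
    · exact hstep a c le_rfl hac hcb hcδ
    · exact (ih (c - δ) (by linarith) (by linarith) (by push_cast at hc; linarith)).trans
        (hstep (c - δ) c (by linarith) (by linarith) hcb (by linarith))

theorem le_of_hasDerivAt_of_nonpos_of_nonneg {g g' : ℝ → ℝ} {a : ℝ}
    (hg : ∀ x, HasDerivAt g (g' x) x) (hle : ∀ x ≤ a, g' x ≤ 0) (hge : ∀ x, a ≤ x → 0 ≤ g' x)
    (x : ℝ) : g a ≤ g x := by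
  have hcont : Continuous g := continuous_iff_continuousAt.mpr fun x => (hg x).continuousAt
  rcases le_total a x with hax | hxa
  · refine monotoneOn_of_hasDerivWithinAt_nonneg (convex_Ici a) hcont.continuousOn
      (fun y _ => (hg y).hasDerivWithinAt) (fun y hy => hge y ?_) self_mem_Ici hax hax
    rw [interior_Ici] at hy
    exact hy.le
  · refine antitoneOn_of_hasDerivWithinAt_nonpos (convex_Iic a) hcont.continuousOn
      (fun y _ => (hg y).hasDerivWithinAt) (fun y hy => hle y ?_) hxa self_mem_Iic hxa
    rw [interior_Iic] at hy
    exact hy.le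

namespace CostDist

variable (D : CostDist)

theorem strictMono_F : StrictMono D.F :=
  strictMono_of_deriv_pos fun x => by rw [(D.deriv_eq x).deriv]; exact D.f_pos x

theorem F_pos (x : ℝ) : 0 < D.F x :=
  (D.strictMono_F.monotone.le_of_tendsto D.tendsto_bot (x - 1)).trans_lt
    (D.strictMono_F (sub_one_lt x))

theorem F_lt_one (x : ℝ) : D.F x < 1 :=
  (D.strictMono_F (lt_add_one x)).trans_le
    (D.strictMono_F.monotone.ge_of_tendsto D.tendsto_top (x + 1))

theorem f_mul_f_le {x y δ : ℝ} (hxy : x ≤ y) (hδ : 0 ≤ δ) :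
    D.f x * D.f (y + δ) ≤ D.f (x + δ) * D.f y := by
  have h := D.f_logConcave.add_le_add_of_le_of_nonneg hxy hδ
  simp only [← Real.log_mul (D.f_pos _).ne' (D.f_pos _).ne'] at h
  exact (Real.log_le_log_iff (mul_pos (D.f_pos _) (D.f_pos _))
    (mul_pos (D.f_pos _) (D.f_pos _))).mp h

theorem integral_f (a b : ℝ) : ∫ s in a..b, D.f s = D.F b - D.F a :=
  intervalIntegral.integral_eq_sub_of_hasDerivAt (fun x _ => D.deriv_eq x)
    (D.f_diff.continuous.intervalIntegrable _ _)

theorem integral_f_comp_add_right (a b δ : ℝ) :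
    ∫ s in a..b, D.f (s + δ) = D.F (b + δ) - D.F (a + δ) := by
  rw [intervalIntegral.integral_comp_add_right (D.f ·) δ, integral_f]

-- equivalently, `F` is log-concave (Prékopa)
theorem monotone_F_div_f : Monotone fun x => D.F x / D.f x := by
  intro x y hxy
  rw [div_le_div_iff₀ (D.f_pos x) (D.f_pos y)]
  set δ := y - x
  have hy : x + δ = y := by ring
  -- integrate `f s f(y) ≤ f (s + δ) f(x)` over `s ∈ [a, x]`, then let `a → -∞`
  have key : ∀ a ≤ x, (D.F x - D.F a) * D.f y ≤ D.F y * D.f x := by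
    intro a ha
    have hcont : Continuous fun s => D.f (s + δ) * D.f x :=
      (D.f_diff.continuous.comp (continuous_add_const δ)).mul continuous_const
    calc (D.F x - D.F a) * D.f y = ∫ s in a..x, D.f s * D.f y := by
          rw [intervalIntegral.integral_mul_const, integral_f]
      _ ≤ ∫ s in a..x, D.f (s + δ) * D.f x := by
          refine intervalIntegral.integral_mono_on ha
            ((D.f_diff.continuous.mul continuous_const).intervalIntegrable _ _)
            (hcont.intervalIntegrable _ _) fun s hs => ?_
          simpa [hy] using D.f_mul_f_le hs.2 (sub_nonneg.mpr hxy)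
      _ = (D.F y - D.F (a + δ)) * D.f x := by
          rw [intervalIntegral.integral_mul_const, integral_f_comp_add_right, hy]
      _ ≤ D.F y * D.f x := by nlinarith [D.F_pos (a + δ), D.f_pos x]
  have hlim : Tendsto (fun a => (D.F x - D.F a) * D.f y) atBot (nhds ((D.F x - 0) * D.f y)) :=
    (tendsto_const_nhds.sub D.tendsto_bot).mul_const _
  simpa using le_of_tendsto hlim ((eventually_le_atBot x).mono key)

/-- Reflection `x ↦ -x` exchanges `F` with `1 - F`, and so the roles of `k₀` and `k₁`. -/
def reflect : CostDist where
  F x := 1 - D.F (-x)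
  f x := D.f (-x)
  deriv_eq x := by
    simpa using ((D.deriv_eq (-x)).comp x (hasDerivAt_neg x)).const_sub 1
  f_pos x := D.f_pos (-x)
  f_diff := D.f_diff.comp differentiable_neg
  f_logConcave := by
    refine ⟨convex_univ, fun x _ y _ a b ha hb hab => ?_⟩
    simpa [smul_eq_mul, neg_add, mul_neg, add_comm] using
      D.f_logConcave.2 (mem_univ (-x)) (mem_univ (-y)) ha hb hab
  tendsto_bot := by
    simpa using (D.tendsto_top.comp tendsto_neg_atBot_atTop).const_sub 1
  tendsto_top := by
    simpa using (D.tendsto_bot.comp tendsto_neg_atTop_atBot).const_sub 1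

theorem antitone_one_sub_F_div_f : Antitone fun x => (1 - D.F x) / D.f x := fun x y hxy => by
  simpa [reflect] using D.reflect.monotone_F_div_f (neg_le_neg hxy)

theorem isMinOn_sub_mul_F {t a : ℝ} (ha : a = t - D.F a / D.f a) :
    IsMinOn (fun x => (x - t) * D.F x) univ a := by
  have hFa : D.F a / D.f a = t - a := by linarith
  refine isMinOn_univ_iff.mpr fun x => le_of_hasDerivAt_of_nonpos_of_nonneg
    (g' := fun u => D.F u + (u - t) * D.f u)
    (fun u => by simpa [add_comm] using ((hasDerivAt_id u).sub_const t).mul (D.deriv_eq u))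
    (fun u hu => ?_) (fun u hu => ?_) x
  · have h : D.F u / D.f u ≤ t - a := hFa ▸ D.monotone_F_div_f hu
    rw [div_le_iff₀ (D.f_pos u)] at h
    nlinarith [mul_nonneg (sub_nonneg.mpr hu) (D.f_pos u).le]
  · have h : t - a ≤ D.F u / D.f u := hFa ▸ D.monotone_F_div_f hu
    rw [le_div_iff₀ (D.f_pos u)] at h
    nlinarith [mul_nonneg (sub_nonneg.mpr hu) (D.f_pos u).le]

theorem isMaxOn_sub_mul_one_sub_F {t b : ℝ} (hb : b = t + (1 - D.F b) / D.f b) :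
    IsMaxOn (fun y => (y - t) * (1 - D.F y)) univ b := by
  have h := D.reflect.isMinOn_sub_mul_F (t := -t) (a := -b) (by simp [reflect]; linarith)
  refine isMaxOn_univ_iff.mpr fun y => ?_
  have := isMinOn_univ_iff.mp h (-y)
  simp only [reflect, neg_neg] at this
  linear_combination this

def threshold (k0 k1 : ℝ → ℝ) (t : ℝ) : ℝ :=
  k0 t * D.F (k0 t) + k1 t * (1 - D.F (k1 t)) + t * (D.F (k1 t) - D.F (k0 t))

variable {D} {k0 k1 : ℝ → ℝ}

theorem lt_of_eq_add {t k : ℝ} (hk : k = t + (1 - D.F k) / D.f k) : t < k := by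
  have := div_pos (sub_pos.mpr (D.F_lt_one k)) (D.f_pos k)
  linarith

theorem lt_of_eq_sub {t k : ℝ} (hk : k = t - D.F k / D.f k) : k < t := by
  have := div_pos (D.F_pos k) (D.f_pos k)
  linarith

theorem antitoneOn_sub_of_eq_add
    (hk1 : ∀ t : ℝ, 0 ≤ t → k1 t = t + (1 - D.F (k1 t)) / D.f (k1 t)) :
    AntitoneOn (fun t => k1 t - t) (Ici 0) := by
  intro s hs u hu hsu
  rcases le_total (k1 u) (k1 s) with h | h
  · linarith
  · linarith [D.antitone_one_sub_F_div_f h, hk1 s hs, hk1 u hu]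

theorem threshold_lt_of_le
    (hk1 : ∀ t : ℝ, 0 ≤ t → k1 t = t + (1 - D.F (k1 t)) / D.f (k1 t))
    (hk0 : ∀ t : ℝ, 0 ≤ t → k0 t = t - D.F (k0 t) / D.f (k0 t))
    {s u : ℝ} (hs : 0 ≤ s) (hsu : s < u) (hu : u ≤ k1 s) :
    D.threshold k0 k1 s < D.threshold k0 k1 u := by
  have hu0 : 0 ≤ u := hs.trans hsu.le
  have hmin := isMinOn_univ_iff.mp (D.isMinOn_sub_mul_F (hk0 s hs)) (k0 u)
  have hmax := isMaxOn_univ_iff.mp (D.isMaxOn_sub_mul_one_sub_F (hk1 u hu0)) (k1 s)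
  have hF : D.F (k0 u) < D.F (k1 s) :=
    D.strictMono_F ((lt_of_eq_sub (hk0 u hu0)).trans_le hu)
  simp only [threshold] at hmin hmax ⊢
  nlinarith [mul_pos (sub_pos.mpr hsu) (sub_pos.mpr hF)]

theorem strictMonoOn_threshold
    (hk1 : ∀ t : ℝ, 0 ≤ t → k1 t = t + (1 - D.F (k1 t)) / D.f (k1 t))
    (hk0 : ∀ t : ℝ, 0 ≤ t → k0 t = t - D.F (k0 t) / D.f (k0 t)) :
    StrictMonoOn (D.threshold k0 k1) (Ici 0) := by
  intro t ht t' ht' htt'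
  refine lt_of_forall_short_step_lt (sub_pos.mpr (lt_of_eq_add (hk1 t' ht')))
    htt' fun s u hts hsu hut' hus => threshold_lt_of_le hk1 hk0 (ht.trans hts) hsu ?_
  have hs : s ∈ Ici (0 : ℝ) := mem_Ici.mpr (ht.trans hts)
  linarith [antitoneOn_sub_of_eq_add hk1 hs ht' (hsu.le.trans hut')]

end CostDist

/-- **Proposition 6.** The threshold `Θ(t) = k₀(t)·F(k₀(t)) + k₁(t)·(1 − F(k₁(t))) +
t·(F(k₁(t)) − F(k₀(t)))` is strictly increasing on `[0,∞)`; hence if a voter with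
cost `γ` has optimal `k` equal to `k₁(t)` (i.e. `γ ≤ Θ(t)`), the same holds at any
`t' > t`. -/
theorem prop6 (D : CostDist) (k0 k1 : ℝ → ℝ)
    (hk1 : ∀ t : ℝ, 0 ≤ t → k1 t = t + (1 - D.F (k1 t)) / D.f (k1 t))
    (hk0 : ∀ t : ℝ, 0 ≤ t → k0 t = t - D.F (k0 t) / D.f (k0 t)) :
    StrictMonoOn
      (fun t : ℝ =>
        k0 t * D.F (k0 t) + k1 t * (1 - D.F (k1 t)) + t * (D.F (k1 t) - D.F (k0 t)))
      (Set.Ici 0) ∧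
    (∀ gamma t t' : ℝ, 0 ≤ t → t < t' →
      gamma ≤ k0 t * D.F (k0 t) + k1 t * (1 - D.F (k1 t)) + t * (D.F (k1 t) - D.F (k0 t)) →
      gamma ≤ k0 t' * D.F (k0 t') + k1 t' * (1 - D.F (k1 t')) +
        t' * (D.F (k1 t') - D.F (k0 t'))) := by
  have hmono := D.strictMonoOn_threshold hk1 hk0
  exact ⟨hmono, fun gamma t t' ht htt' hγ =>
    hγ.trans (hmono ht (mem_Ici.mpr (ht.trans htt'.le)) htt').le⟩
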